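/- Let x₁, …, x_M be independent random points in ℝⁿ, where each x_k has independent components supported in [0,1], all points share the same component-wise means μ = (μ₁,…,μ_n), and the minimal average component variance σ₀² = min_k (1/n)Σᵢ Var[x_k^i] is positive. Let c be the center (1/2,…,1/2) of the cube. If M < √δ · exp((256/81)·n·σ₀⁴), then the set {x₁, …, x_M} is (1,c)-Fisher separable with probability greater than 1 − δ. -/

import Mathlib

open MeasureTheory ProbabilityTheory Real
open scoped RealInnerProductSpace ENNReal NNReal

/-!
For distinct `k, l`, the pair fails to be separated iff `∑ i, zᵢ ≥ 0`, where
`zᵢ = (x_kⁱ - 1/2) (x_lⁱ - x_kⁱ)`, since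
`⟪x_k - c, x_l - c⟫ - ⟪x_k - c, x_k - c⟫ = ∑ i, zᵢ`.
The `zᵢ` are independent (the pairs `(x_kⁱ, x_lⁱ)` are), lie in `[-1/2, 1/16]`, and have mean
`-Var x_kⁱ` because `x_kⁱ` and `x_lⁱ` are independent with the same mean. Hoeffding's inequality bounds the failure probability
by `exp (-(512/81) n σ₀⁴)`, and a union bound over the ordered pairs gives failure probability
below `M² exp (-(512/81) n σ₀⁴) < δ`.
-/

section

variable {Ω : Type*} [MeasurableSpace Ω] {μ : Measure Ω}

lemma sub_half_mul_sub_mem_Icc {u v : ℝ} (hu : u ∈ Set.Icc (0 : ℝ) 1)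
    (hv : v ∈ Set.Icc (0 : ℝ) 1) :
    (u - 1 / 2) * (v - u) ∈ Set.Icc (-(1 / 2) : ℝ) (1 / 16) := by
  obtain ⟨hu0, hu1⟩ := hu
  obtain ⟨hv0, hv1⟩ := hv
  constructor
  · nlinarith [sq_nonneg (u - 1 / 2 + (v - 1 / 2))]
  · nlinarith [sq_nonneg (u - 1 / 2 - (v - 1 / 2) / 2)]

lemma inner_sub_const_sub_inner_sub_const {ι : Type*} [Fintype ι] (x y : EuclideanSpace ℝ ι)
    (a : ℝ) :
    ⟪x - WithLp.toLp 2 (fun _ ↦ a), y - WithLp.toLp 2 (fun _ ↦ a)⟫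
      - ⟪x - WithLp.toLp 2 (fun _ ↦ a), x - WithLp.toLp 2 (fun _ ↦ a)⟫
      = ∑ i, (x i - a) * (y i - x i) := by
  rw [← inner_sub_right, sub_sub_sub_cancel_right, PiLp.inner_apply]
  simp [mul_comm]

lemma iIndepFun_prodMk_of_indepFun {ι β γ : Type*} [Fintype ι] [MeasurableSpace β]
    [MeasurableSpace γ] [IsProbabilityMeasure μ] {f : ι → Ω → β} {g : ι → Ω → γ}
    (hf : ∀ i, Measurable (f i)) (hg : ∀ i, Measurable (g i))
    (hfg : IndepFun (fun ω i ↦ f i ω) (fun ω i ↦ g i ω) μ)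
    (hf_indep : iIndepFun f μ) (hg_indep : iIndepFun g μ) :
    iIndepFun (fun i ω ↦ (f i ω, g i ω)) μ := by
  have hF : Measurable fun ω i ↦ f i ω := measurable_pi_lambda _ hf
  have hG : Measurable fun ω i ↦ g i ω := measurable_pi_lambda _ hg
  rw [iIndepFun_iff_map_fun_eq_pi_map fun i ↦ ((hf i).prodMk (hg i)).aemeasurable]
  have hpair (i : ι) : μ.map (fun ω ↦ (f i ω, g i ω)) = (μ.map (f i)).prod (μ.map (g i)) :=
    (indepFun_iff_map_prod_eq_prod_map_map (hf i).aemeasurable (hg i).aemeasurable).1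
      (hfg.comp (measurable_pi_apply i) (measurable_pi_apply i))
  simp_rw [hpair]
  rw [← ((measurePreserving_arrowProdEquivProdArrow β γ ι _ _).symm _).map_eq,
    ← hf_indep.map_fun_eq_pi_map fun i ↦ (hf i).aemeasurable,
    ← hg_indep.map_fun_eq_pi_map fun i ↦ (hg i).aemeasurable,
    ← (indepFun_iff_map_prod_eq_prod_map_map hF.aemeasurable hG.aemeasurable).1 hfg,
    Measure.map_map (MeasurableEquiv.measurable _) (hF.prodMk hG)]
  rfl

lemma integral_sub_mul_sub_eq_neg_variance [IsProbabilityMeasure μ] {U V : Ω → ℝ}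
    (hU : MemLp U 2 μ) (hV : MemLp V 2 μ) (hUV : IndepFun U V μ) (hmean : μ[U] = μ[V])
    (c : ℝ) :
    ∫ ω, (U ω - c) * (V ω - U ω) ∂μ = -Var[U; μ] := by
  have hUi := hU.integrable one_le_two
  have hVi := hV.integrable one_le_two
  have hexpand : ∫ ω, (U ω - c) * (V ω - U ω) ∂μ
      = ∫ ω, U ω * V ω ∂μ - ∫ ω, U ω ^ 2 ∂μ - c * (μ[V] - μ[U]) := by
    have : (fun ω ↦ (U ω - c) * (V ω - U ω))
        = fun ω ↦ (U ω * V ω - U ω ^ 2) - c * (V ω - U ω) := by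
      ext ω; ring
    have hUV_int : Integrable (fun ω ↦ U ω * V ω) μ := hU.integrable_mul hV
    have hU_sq : Integrable (fun ω ↦ U ω ^ 2) μ := hU.integrable_sq
    have hdiff : Integrable (fun ω ↦ U ω * V ω - U ω ^ 2) μ := hUV_int.sub hU_sq
    have hlin : Integrable (fun ω ↦ c * (V ω - U ω)) μ := (hVi.sub hUi).const_mul c
    rw [this, integral_sub hdiff hlin, integral_sub hUV_int hU_sq, integral_const_mul,
      integral_sub hVi hUi]
  rw [hexpand,
    hUV.integral_fun_mul_eq_mul_integral hU.aestronglyMeasurable hV.aestronglyMeasurable,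
    variance_eq_sub hU, ← hmean]
  simp only [Pi.pow_apply]
  ring

lemma measureReal_sum_nonneg_le_of_iIndepFun {ι : Type*} {s : Finset ι} {z : ι → Ω → ℝ}
    [IsProbabilityMeasure μ] (hz : ∀ i, Measurable (z i)) (h_indep : iIndepFun z μ)
    {a b t : ℝ} (hz_mem : ∀ i ω, z i ω ∈ Set.Icc a b) (ht : 0 ≤ t)
    (hmean : ∑ i ∈ s, μ[z i] ≤ -(s.card * t)) :
    μ.real {ω | 0 ≤ ∑ i ∈ s, z i ω} ≤ exp (-2 * s.card * t ^ 2 / (b - a) ^ 2) := by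
  have h_centered : iIndepFun (fun i ω ↦ z i ω - μ[z i]) μ :=
    h_indep.comp (fun i x ↦ x - ∫ ω, z i ω ∂μ) fun i ↦ measurable_id.sub_const _
  have h_subG (i : ι) (_ : i ∈ s) := hasSubgaussianMGF_of_mem_Icc (hz i).aemeasurable
    (ae_of_all μ (hz_mem i))
  calc μ.real {ω | 0 ≤ ∑ i ∈ s, z i ω}
      ≤ μ.real {ω | s.card * t ≤ ∑ i ∈ s, (z i ω - μ[z i])} := by
        refine measureReal_mono (fun ω hω ↦ ?_)
        simp only [Set.mem_ofPred_eq, Finset.sum_sub_distrib] at hω ⊢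
        linarith
    _ ≤ exp (-(s.card * t) ^ 2
          / (2 * ((∑ _i ∈ s, (‖b - a‖₊ / 2) ^ 2 : ℝ≥0) : ℝ))) :=
        HasSubgaussianMGF.measure_sum_ge_le_of_iIndepFun h_centered h_subG (by positivity)
    _ = exp (-2 * s.card * t ^ 2 / (b - a) ^ 2) := by
        have hc : ((∑ _i ∈ s, (‖b - a‖₊ / 2) ^ 2 : ℝ≥0) : ℝ)
            = s.card * (b - a) ^ 2 / 4 := by
          push_cast
          simp only [Finset.sum_const, nsmul_eq_mul, Real.norm_eq_abs, div_pow, sq_abs]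
          ring
        rw [hc]
        congr 1
        generalize (b - a) ^ 2 = q
        rcases eq_or_ne (s.card : ℝ) 0 with hs | hs
        · simp [hs]
        · calc -(s.card * t) ^ 2 / (2 * (s.card * q / 4))
              = -2 * (s.card * (s.card : ℝ)⁻¹) * s.card * t ^ 2 / q := by ring
            _ = -2 * s.card * t ^ 2 / q := by rw [mul_inv_cancel₀ hs]; ring

lemma ofReal_one_sub_lt_measure_forall_ne {ι : Type*} [Fintype ι] [IsProbabilityMeasure μ]
    (P : ι → ι → Ω → Prop) {p δ : ℝ} (hp : 0 ≤ p)
    (hP : ∀ k l, k ≠ l → μ.real {ω | ¬ P k l ω} ≤ p)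
    (hδ : (Fintype.card ι : ℝ) ^ 2 * p < δ) (hδ1 : δ ≤ 1) :
    ENNReal.ofReal (1 - δ) < μ {ω | ∀ k l, k ≠ l → P k l ω} := by
  set S := {ω | ∀ k l, k ≠ l → P k l ω}
  have hcover : Sᶜ ⊆ ⋃ k, ⋃ l, {ω | k ≠ l ∧ ¬ P k l ω} := by
    intro ω hω
    simp only [S, Set.mem_compl_iff, Set.mem_ofPred_eq, not_forall] at hω
    obtain ⟨k, l, hkl, h⟩ := hω
    exact Set.mem_iUnion₂.2 ⟨k, l, hkl, h⟩
  have hpair (k l : ι) : μ.real {ω | k ≠ l ∧ ¬ P k l ω} ≤ p := by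
    by_cases hkl : k = l
    · simp [hkl, hp]
    · exact measureReal_mono (fun ω hω ↦ hω.2) |>.trans (hP k l hkl)
  have hSc : μ.real Sᶜ ≤ Fintype.card ι ^ 2 * p := calc
    μ.real Sᶜ ≤ ∑ k, ∑ l, μ.real {ω | k ≠ l ∧ ¬ P k l ω} :=
      (measureReal_mono hcover).trans <| (measureReal_iUnion_fintype_le _).trans <|
        Finset.sum_le_sum fun k _ ↦ measureReal_iUnion_fintype_le _
    _ ≤ ∑ _k : ι, ∑ _l : ι, p :=
      Finset.sum_le_sum fun k _ ↦ Finset.sum_le_sum fun l _ ↦ hpair k l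
    _ = Fintype.card ι ^ 2 * p := by
      simp only [Finset.sum_const, Finset.card_univ, nsmul_eq_mul]; ring
  have hS : 1 ≤ μ.real S + μ.real Sᶜ := by
    simpa [Set.union_compl_self] using measureReal_union_le (μ := μ) S Sᶜ
  rw [← ofReal_measureReal]
  exact (ENNReal.ofReal_lt_ofReal_iff'.2 ⟨by linarith, by linarith⟩)

lemma measureReal_fisher_inseparable_le {n : ℕ} [IsProbabilityMeasure μ]
    {Y Z : Ω → EuclideanSpace ℝ (Fin n)} (hY : Measurable Y) (hZ : Measurable Z)
    (hYZ : IndepFun Y Z μ) (hY_indep : iIndepFun (fun i ω ↦ Y ω i) μ)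
    (hZ_indep : iIndepFun (fun i ω ↦ Z ω i) μ)
    (hY_mem : ∀ i ω, Y ω i ∈ Set.Icc (0 : ℝ) 1)
    (hZ_mem : ∀ i ω, Z ω i ∈ Set.Icc (0 : ℝ) 1)
    (hmean : ∀ i, ∫ ω, Y ω i ∂μ = ∫ ω, Z ω i ∂μ) {σ0 : ℝ}
    (hvar : σ0 ^ 2 ≤ (1 / (n : ℝ)) * ∑ i, Var[fun ω ↦ Y ω i; μ]) :
    μ.real {ω | ⟪Y ω - WithLp.toLp 2 (fun _ ↦ 1 / 2),
          Y ω - WithLp.toLp 2 (fun _ ↦ 1 / 2)⟫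
        ≤ ⟪Y ω - WithLp.toLp 2 (fun _ ↦ 1 / 2), Z ω - WithLp.toLp 2 (fun _ ↦ 1 / 2)⟫}
      ≤ exp (-(512 / 81) * n * σ0 ^ 4) := by
  have hcoord (i : Fin n) : Measurable fun x : EuclideanSpace ℝ (Fin n) ↦ x i := by fun_prop
  have hYi (i : Fin n) : Measurable fun ω ↦ Y ω i := by fun_prop
  have hZi (i : Fin n) : Measurable fun ω ↦ Z ω i := by fun_prop
  set z : Fin n → Ω → ℝ := fun i ω ↦ (Y ω i - 1 / 2) * (Z ω i - Y ω i)
  have hz_meas (i : Fin n) : Measurable (z i) := by fun_prop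
  have hz_indep : iIndepFun z μ :=
    (iIndepFun_prodMk_of_indepFun hYi hZi
      (hYZ.comp (WithLp.measurable_ofLp 2 _) (WithLp.measurable_ofLp 2 _)) hY_indep hZ_indep).comp
      (fun _ p ↦ (p.1 - 1 / 2) * (p.2 - p.1)) fun _ ↦ by fun_prop
  have hz_mem (i : Fin n) (ω : Ω) : z i ω ∈ Set.Icc (-(1 / 2) : ℝ) (1 / 16) :=
    sub_half_mul_sub_mem_Icc (hY_mem i ω) (hZ_mem i ω)
  have hmemLp {W : Ω → ℝ} (hW : Measurable W) (hW_mem : ∀ ω, W ω ∈ Set.Icc (0 : ℝ) 1) :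
      MemLp W 2 μ :=
    MemLp.of_bound hW.aestronglyMeasurable 1 (ae_of_all _ fun ω ↦ by
      rw [Real.norm_eq_abs, abs_le]; exact ⟨by linarith [(hW_mem ω).1], (hW_mem ω).2⟩)
  have hz_mean : ∑ i, μ[z i] ≤ -((Finset.univ : Finset (Fin n)).card * σ0 ^ 2) := by
    have hz_int (i : Fin n) : μ[z i] = -Var[fun ω ↦ Y ω i; μ] :=
      integral_sub_mul_sub_eq_neg_variance (hmemLp (hYi i) (hY_mem i))
        (hmemLp (hZi i) (hZ_mem i)) (hYZ.comp (hcoord i) (hcoord i)) (hmean i) _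
    simp_rw [hz_int, Finset.sum_neg_distrib, neg_le_neg_iff, Finset.card_univ, Fintype.card_fin]
    rcases Nat.eq_zero_or_pos n with rfl | hn
    · simp
    · rwa [one_div_mul_eq_div, le_div_iff₀ (by positivity), mul_comm] at hvar
  calc _ ≤ μ.real {ω | 0 ≤ ∑ i, z i ω} := by
        refine measureReal_mono fun ω hω ↦ ?_
        have := inner_sub_const_sub_inner_sub_const (Y ω) (Z ω) (1 / 2)
        simp only [Set.mem_ofPred_eq] at hω ⊢
        linarith
    _ ≤ exp (-2 * (Finset.univ : Finset (Fin n)).card * (σ0 ^ 2) ^ 2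
          / (1 / 16 - -(1 / 2)) ^ 2) :=
        measureReal_sum_nonneg_le_of_iIndepFun hz_meas hz_indep hz_mem (sq_nonneg σ0) hz_mean
    _ = exp (-(512 / 81) * n * σ0 ^ 4) := by
        rw [Finset.card_univ, Fintype.card_fin]
        ring_nf

end

theorem stmt_15 {Ω : Type*} [MeasurableSpace Ω] (μ : Measure Ω) [IsProbabilityMeasure μ]
    (n M : ℕ) (X : Fin M → Ω → EuclideanSpace ℝ (Fin n))
    (hmeas : ∀ k, Measurable (X k))
    (hindep : iIndepFun X μ)
    (hcomp : ∀ k, iIndepFun (fun i ω => X k ω i) μ)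
    (hrange : ∀ k i ω, X k ω i ∈ Set.Icc (0:ℝ) 1)
    (μmean : Fin n → ℝ) (hmean : ∀ k i, ∫ ω, X k ω i ∂μ = μmean i)
    (σ0 δ : ℝ)
    (hvar : ∀ k, σ0^2 ≤ (1/(n:ℝ)) * ∑ i, variance (fun ω => X k ω i) μ)
    (hδ0 : 0 < δ) (hδ1 : δ < 1)
    (c : EuclideanSpace ℝ (Fin n)) (hc : c = WithLp.toLp 2 (fun _ => 1/2))
    (hM : (M:ℝ) < Real.sqrt δ * Real.exp ((256/81) * n * σ0^4)) :
    μ {ω | ∀ k l : Fin M, k ≠ l →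
        ⟪X k ω - c, X k ω - c⟫ > ⟪X k ω - c, X l ω - c⟫} > ENNReal.ofReal (1 - δ) := by
  subst hc
  refine ofReal_one_sub_lt_measure_forall_ne _ (exp_pos (-(512 / 81) * n * σ0 ^ 4)).le
    (fun k l hkl ↦ ?_) ?_ hδ1.le
  · simpa only [gt_iff_lt, not_lt] using measureReal_fisher_inseparable_le (hmeas k) (hmeas l)
      (hindep.indepFun hkl) (hcomp k) (hcomp l) (hrange k) (hrange l)
      (fun i ↦ (hmean k i).trans (hmean l i).symm) (hvar k)
  · have hM_sq : (M : ℝ) ^ 2 < δ * exp ((512 / 81) * n * σ0 ^ 4) := by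
      calc (M : ℝ) ^ 2 < (√δ * exp ((256 / 81) * n * σ0 ^ 4)) ^ 2 :=
            pow_lt_pow_left₀ hM (Nat.cast_nonneg M) two_ne_zero
        _ = δ * exp ((512 / 81) * n * σ0 ^ 4) := by
            rw [mul_pow, sq_sqrt hδ0.le, ← exp_nat_mul]; ring_nf
    calc (Fintype.card (Fin M) : ℝ) ^ 2 * exp (-(512 / 81) * n * σ0 ^ 4)
        < δ * exp ((512 / 81) * n * σ0 ^ 4) * exp (-(512 / 81) * n * σ0 ^ 4) := by
          rw [Fintype.card_fin]; gcongr
      _ = δ := by rw [mul_assoc, ← exp_add, neg_mul, neg_mul, add_neg_cancel, exp_zero, mul_one]
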